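/- arXiv:2512.04218 — 2 statements merged into one kernel-verified Lean document; each statement's English description precedes it below -/
import Mathlib

section
/- Let z : {1, ..., m} → ℝ_{>0} satisfy z(1) = 1 and z(k+1)/z(k) = k/ρ for 1 ≤ k < m, where ρ ≥ m. Then for 2 ≤ k ≤ m, log z(k) ≤ -log ρ - k + log(2k²). -/
/-!
Unrolling the recursion gives `z (n + 1) = n! / ρ ^ n`. Since `(x + 1) (log (x + 1) - log x) ≥ 1`,
each step raises `log 2 + (n + 1) (log (n + 1) - 1)` by at least `log (n + 1)`, so it dominates
`log n!` (the discrete form of `∑ log i ≤ ∫ log`). What remains is the factor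
`(k / ρ) ^ (k - 2) ≤ 1`, which is where `k ≤ m ≤ ρ` enters.
-/

open Real
open scoped Nat

lemma one_le_mul_log_add_one_sub_log {x : ℝ} (hx : 0 < x) :
    1 ≤ (x + 1) * (log (x + 1) - log x) := by
  have h := one_sub_inv_le_log_of_pos (div_pos (by linarith : 0 < x + 1) hx)
  rw [log_div (by linarith) hx.ne', inv_div] at h
  have hfrac : 1 - x / (x + 1) = 1 / (x + 1) := by field_simp; ring
  rw [hfrac, div_le_iff₀' (by linarith)] at h
  exact h

lemma log_factorial_le (n : ℕ) (hn : 1 ≤ n) :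
    log (n ! : ℝ) ≤ log 2 + (n + 1) * (log (n + 1) - 1) := by
  induction n, hn using Nat.le_induction with
  | base =>
    norm_num
    linarith [log_two_gt_d9]
  | succ n hn ih =>
    have hstep := one_le_mul_log_add_one_sub_log (x := (n : ℝ) + 1) (by positivity)
    rw [Nat.factorial_succ, Nat.cast_mul, log_mul (by positivity) (by positivity)]
    push_cast
    linear_combination ih + hstep

lemma eq_factorial_div_pow_of_div_eq {ρ : ℝ} (hρ : ρ ≠ 0) {m : ℕ} {z : ℕ → ℝ}
    (hz1 : z 1 = 1)
    (hzrec : ∀ k : ℕ, 1 ≤ k → k < m → z (k + 1) / z k = (k : ℝ) / ρ) :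
    ∀ n : ℕ, n < m → z (n + 1) = n ! / ρ ^ n := by
  intro n
  induction n with
  | zero => simp [hz1]
  | succ n ih =>
    intro hn
    have hrec := hzrec (n + 1) (by omega) hn
    -- the ratio `(n + 1) / ρ` is nonzero, so `z (n + 1)` cannot be `0`
    have hz : z (n + 1) ≠ 0 :=
      (div_ne_zero_iff.mp (hrec ▸ div_ne_zero (by positivity) hρ)).2
    rw [div_eq_iff hz] at hrec
    rw [hrec, ih (by omega), Nat.factorial_succ]
    push_cast
    field_simp
    ring

theorem stmt_10_general (ρ : ℝ) (hρ : 0 < ρ) (m : ℕ) (hm : (m : ℝ) ≤ ρ)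
    (z : ℕ → ℝ) (hz1 : z 1 = 1)
    (hzrec : ∀ k : ℕ, 1 ≤ k → k < m → z (k + 1) / z k = (k : ℝ) / ρ) :
    ∀ k : ℕ, 2 ≤ k → k ≤ m →
      Real.log (z k) ≤ -Real.log ρ - (k : ℝ) + Real.log (2 * (k : ℝ) ^ 2) := by
  intro k hk hkm
  obtain ⟨n, rfl⟩ : ∃ n, k = n + 1 := ⟨k - 1, by omega⟩
  have hn : (1 : ℝ) ≤ n := by exact_mod_cast (by omega : 1 ≤ n)
  have hlog_le : log ((n : ℝ) + 1) ≤ log ρ :=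
    log_le_log (by positivity) (le_trans (by exact_mod_cast hkm) hm)
  rw [eq_factorial_div_pow_of_div_eq hρ.ne' hz1 hzrec n (by omega),
    log_div (by positivity) (by positivity), log_pow, log_mul two_ne_zero (by positivity),
    log_pow]
  push_cast
  nlinarith [log_factorial_le n (by omega),
    mul_le_mul_of_nonneg_left hlog_le (by linarith : (0 : ℝ) ≤ n - 1)]

/-- If `z(1) = 1` and `z(k+1)/z(k) = k/ρ` for `1 ≤ k < m`, with `m ≤ ρ`, then for
`2 ≤ k ≤ m` we have `log z(k) ≤ -log ρ - k + log(2k²)`. -/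
theorem stmt_10 (ρ : ℝ) (hρ : 0 < ρ) (m : ℕ) (hm : (m : ℝ) ≤ ρ)
    (z : ℕ → ℝ) (hz1 : z 1 = 1)
    (hzpos : ∀ k : ℕ, 1 ≤ k → k ≤ m → 0 < z k)
    (hzrec : ∀ k : ℕ, 1 ≤ k → k < m → z (k + 1) / z k = (k : ℝ) / ρ) :
    ∀ k : ℕ, 2 ≤ k → k ≤ m →
      Real.log (z k) ≤ -Real.log ρ - (k : ℝ) + Real.log (2 * (k : ℝ) ^ 2) :=
  stmt_10_general ρ hρ m hm z hz1 hzrec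
end

section
/- Let X be a Poisson point process on [0,1] with intensity λ and, for w ∈ (0,1), partition (0,1) into intervals I_k = (k w/2, (k+1) w/2) for k = 0, ..., ⌊2/w⌋ - 1. Fix α ∈ (0, 1/2). There exists C > 0 such that if λ w ≥ C log λ, then P(X has at least αλw points in every subinterval (y, y+w) with y ∈ [0, 1-w]) → 1 as λ → ∞. -/
open MeasureTheory ProbabilityTheory Filter

/-- `X` is a Poisson point process on `[0,1]` with intensity `l` (under `P`): counts of points
in measurable subsets of `[0,1]` are Poisson with mean `l · |s|`, and counts in pairwise
disjoint sets are independent. -/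
def IsPPP {Ω : Type*} [MeasurableSpace Ω] (P : Measure Ω) (l : ℝ) (X : Ω → Set ℝ) : Prop :=
  (∀ s : Set ℝ, MeasurableSet s → s ⊆ Set.Icc 0 1 → ∀ k : ℕ,
      P {ω | (X ω ∩ s).ncard = k} =
        ENNReal.ofReal (Real.exp (-(l * (volume s).toReal)) *
          (l * (volume s).toReal) ^ k / k.factorial)) ∧
  (∀ (n : ℕ) (s : Fin n → Set ℝ), (∀ i, MeasurableSet (s i) ∧ s i ⊆ Set.Icc 0 1) →
      Pairwise (Function.onFun Disjoint s) →
      iIndepFun (fun i ω => (X ω ∩ s i).ncard) P)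

/-!
Split `(0,1)` into the `⌊2/w⌋` intervals `I_k = (k w/2, (k+1) w/2)`. Every window `(y, y+w)`
contains some `I_k`, so a window with fewer than `αλw` points forces some `I_k` to have fewer
than `αλw = (2α) · E|X ∩ I_k|` points. By the Poisson Chernoff bound this has probability at
most `exp (-klFun (2α) · λw/2)`, where `klFun a = a log a + 1 - a > 0` for `a ≠ 1`. With
`C = 6 / klFun (2α)` this is at most `λ⁻³`, while there are at most `λ` intervals.
-/

open Real Set InformationTheory Topology

lemma klFun_pos {a : ℝ} (ha0 : 0 ≤ a) (ha1 : a ≠ 1) : 0 < klFun a :=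
  (klFun_nonneg ha0).lt_of_ne' (mt (klFun_eq_zero_iff ha0).1 ha1)

lemma sum_range_poisson_le_exp_klFun {a μ : ℝ} (ha0 : 0 < a) (ha1 : a ≤ 1) (hμ : 0 ≤ μ)
    {m : ℕ} (hm : (m : ℝ) ≤ a * μ + 1) :
    ∑ j ∈ Finset.range m, exp (-μ) * μ ^ j / j.factorial ≤ exp (-(klFun a * μ)) := by
  obtain _ | n := m
  · simpa using (exp_pos _).le
  have hn : (n : ℝ) ≤ a * μ := by push_cast at hm; linarith
  have hterm : ∀ j ∈ Finset.range (n + 1),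
      a ^ n * (exp (-μ) * μ ^ j / j.factorial) ≤ exp (-μ) * ((a * μ) ^ j / j.factorial) := by
    intro j hj
    have hpow : a ^ n ≤ a ^ j :=
      pow_le_pow_of_le_one ha0.le ha1 (Nat.lt_succ_iff.mp (Finset.mem_range.mp hj))
    rw [mul_pow]
    have : a ^ n * μ ^ j ≤ a ^ j * μ ^ j := by gcongr
    calc a ^ n * (exp (-μ) * μ ^ j / j.factorial)
        = exp (-μ) * (a ^ n * μ ^ j / j.factorial) := by ring
      _ ≤ exp (-μ) * (a ^ j * μ ^ j / j.factorial) := by gcongr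
  have hsum : a ^ n * ∑ j ∈ Finset.range (n + 1), exp (-μ) * μ ^ j / j.factorial
      ≤ exp (-μ + a * μ) := by
    calc a ^ n * ∑ j ∈ Finset.range (n + 1), exp (-μ) * μ ^ j / j.factorial
        ≤ exp (-μ) * ∑ j ∈ Finset.range (n + 1), (a * μ) ^ j / j.factorial := by
          rw [Finset.mul_sum, Finset.mul_sum]; exact Finset.sum_le_sum hterm
      _ ≤ exp (-μ) * exp (a * μ) := by gcongr; exact sum_le_exp_of_nonneg (by positivity) _
      _ = exp (-μ + a * μ) := (exp_add _ _).symm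
  have hpow : exp (a * μ * log a) ≤ a ^ n := by
    rw [← exp_log ha0, ← exp_nat_mul, exp_log ha0, exp_le_exp]
    exact mul_le_mul_of_nonpos_right hn (log_nonpos ha0.le ha1)
  have hsplit : exp (-μ + a * μ) = exp (-(klFun a * μ)) * exp (a * μ * log a) := by
    rw [← exp_add, klFun_apply]; ring_nf
  refine le_of_mul_le_mul_left ?_ (exp_pos (a * μ * log a))
  rw [mul_comm _ (exp (-(klFun a * μ))), ← hsplit]
  exact (mul_le_mul_of_nonneg_right hpow (Finset.sum_nonneg fun j _ => by positivity)).trans hsum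

lemma IsPPP.measure_ncard_lt_le {Ω : Type*} [MeasurableSpace Ω] {P : Measure Ω} {l a : ℝ}
    {X : Ω → Set ℝ} (hX : IsPPP P l X) (hl : 0 ≤ l) {s : Set ℝ} (hs : MeasurableSet s)
    (hs1 : s ⊆ Icc 0 1) (ha0 : 0 < a) (ha1 : a ≤ 1) {m : ℕ}
    (hm : (m : ℝ) ≤ a * (l * (volume s).toReal) + 1) :
    P {ω | (X ω ∩ s).ncard < m} ≤
      ENNReal.ofReal (exp (-(klFun a * (l * (volume s).toReal)))) := by
  set μ := l * (volume s).toReal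
  have hμ : 0 ≤ μ := by positivity
  have hsub : {ω | (X ω ∩ s).ncard < m} ⊆ ⋃ j ∈ Finset.range m, {ω | (X ω ∩ s).ncard = j} :=
    fun ω hω => mem_biUnion (Finset.mem_range.mpr hω) rfl
  calc P {ω | (X ω ∩ s).ncard < m}
      ≤ ∑ j ∈ Finset.range m, P {ω | (X ω ∩ s).ncard = j} :=
        (measure_mono hsub).trans (measure_biUnion_finset_le _ _)
    _ = ENNReal.ofReal (∑ j ∈ Finset.range m, exp (-μ) * μ ^ j / j.factorial) := by
        rw [ENNReal.ofReal_sum_of_nonneg fun j _ => by positivity]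
        exact Finset.sum_congr rfl fun j _ => hX.1 s hs hs1 j
    _ ≤ ENNReal.ofReal (exp (-(klFun a * μ))) :=
        ENNReal.ofReal_le_ofReal (sum_range_poisson_le_exp_klFun ha0 ha1 hμ hm)

/-- The interval `I_k` of the partition of `(0,1)`. -/
def halfWindow (w : ℝ) (k : ℕ) : Set ℝ := Ioo (k * w / 2) ((k + 1) * w / 2)

lemma volume_halfWindow {w : ℝ} (hw : 0 ≤ w) (k : ℕ) :
    (volume (halfWindow w k)).toReal = w / 2 := by
  rw [halfWindow, Real.volume_Ioo, ENNReal.toReal_ofReal (by nlinarith)]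
  ring

lemma halfWindow_subset_Icc {w : ℝ} (hw : 0 < w) {k : ℕ} (hk : k < ⌊2 / w⌋₊) :
    halfWindow w k ⊆ Icc 0 1 := by
  have hk1 : (k : ℝ) + 1 ≤ 2 / w :=
    (by exact_mod_cast hk : (k : ℝ) + 1 ≤ ⌊2 / w⌋₊).trans (Nat.floor_le (by positivity))
  rw [le_div_iff₀ hw] at hk1
  exact fun x hx => ⟨by nlinarith [hx.1], by linarith [hx.2]⟩

lemma exists_halfWindow_subset {w y : ℝ} (hw : 0 < w) (hy0 : 0 ≤ y) (hy1 : y ≤ 1 - w) :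
    ∃ k < ⌊2 / w⌋₊, halfWindow w k ⊆ Ioo y (y + w) := by
  set k := ⌈2 * y / w⌉₊
  have hk₁ : 2 * y ≤ k * w := (div_le_iff₀ hw).1 (Nat.le_ceil _)
  have hk₂ : (k : ℝ) * w < 2 * y + w := by
    have := Nat.ceil_lt_add_one (by positivity : 0 ≤ 2 * y / w)
    rw [← sub_lt_iff_lt_add, lt_div_iff₀ hw] at this
    linarith
  refine ⟨k, Nat.lt_of_succ_le (Nat.le_floor ?_), Ioo_subset_Ioo (by linarith) (by linarith)⟩
  rw [le_div_iff₀ hw]; push_cast; linarith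

lemma ncard_lt_of_sparse_window {S : Set ℝ} {w y t : ℝ} (hw : 0 < w) (hy0 : 0 ≤ y)
    (hy1 : y ≤ 1 - w) (ht : ((S ∩ Ioo y (y + w)).ncard : ℝ) < t) :
    (S ∩ Icc 0 1).ncard < ⌈t⌉₊ ∨ ∃ k < ⌊2 / w⌋₊, (S ∩ halfWindow w k).ncard < ⌈t⌉₊ := by
  have hwin : Ioo y (y + w) ⊆ Icc 0 1 := fun x hx => ⟨by linarith [hx.1], by linarith [hx.2]⟩
  by_cases hfin : (S ∩ Icc 0 1).Finite
  · obtain ⟨k, hk, hsub⟩ := exists_halfWindow_subset hw hy0 hy1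
    refine Or.inr ⟨k, hk, lt_of_le_of_lt ?_ (Nat.lt_ceil.mpr ht)⟩
    exact ncard_le_ncard (inter_subset_inter_right _ hsub)
      (hfin.subset (inter_subset_inter_right _ hwin))
  · -- `ncard` of an infinite set is `0`, so the event for the whole of `[0,1]` catches this case
    rw [Infinite.ncard hfin]
    exact Or.inl (Nat.ceil_pos.mpr ((Nat.cast_nonneg _).trans_lt ht))

lemma IsPPP.measure_exists_sparse_window_le {Ω : Type*} [MeasurableSpace Ω] {P : Measure Ω}
    {l w α : ℝ} {X : Ω → Set ℝ} (hX : IsPPP P l X) (hl : 0 ≤ l) (hw0 : 0 < w) (hw1 : w ≤ 1)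
    (hα0 : 0 < α) (hα1 : 2 * α ≤ 1) :
    P {ω | ∃ y, 0 ≤ y ∧ y ≤ 1 - w ∧ ((X ω ∩ Ioo y (y + w)).ncard : ℝ) < α * l * w} ≤
      ENNReal.ofReal ((2 / w + 1) * exp (-(klFun (2 * α) * (l * (w / 2))))) := by
  set m := ⌈α * l * w⌉₊
  set K := ⌊2 / w⌋₊
  set E := ENNReal.ofReal (exp (-(klFun (2 * α) * (l * (w / 2)))))
  have hm : (m : ℝ) ≤ α * l * w + 1 := (Nat.ceil_lt_add_one (by positivity)).le
  have hwhole : P {ω | (X ω ∩ Icc 0 1).ncard < m} ≤ E := by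
    have hvol : (volume (Icc (0 : ℝ) 1)).toReal = 1 := by simp
    have hαlw : α * l * w ≤ α * l := mul_le_of_le_one_right (by positivity) hw1
    have hαl : 0 ≤ α * l := by positivity
    refine (hX.measure_ncard_lt_le hl measurableSet_Icc subset_rfl (by positivity) hα1
      (by rw [hvol]; linarith)).trans (ENNReal.ofReal_le_ofReal (exp_le_exp.2 ?_))
    have := klFun_nonneg (by positivity : 0 ≤ 2 * α)
    rw [hvol, neg_le_neg_iff]
    gcongr
    linarith
  have hhalf : ∀ k ∈ Finset.range K, P {ω | (X ω ∩ halfWindow w k).ncard < m} ≤ E := by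
    intro k hk
    have := hX.measure_ncard_lt_le (s := halfWindow w k) hl measurableSet_Ioo
      (halfWindow_subset_Icc hw0 (Finset.mem_range.mp hk)) (by positivity) hα1 (m := m)
    rw [volume_halfWindow hw0.le] at this
    exact this (by linarith)
  calc _ ≤ P ({ω | (X ω ∩ Icc 0 1).ncard < m} ∪
        ⋃ k ∈ Finset.range K, {ω | (X ω ∩ halfWindow w k).ncard < m}) := by
        refine measure_mono fun ω ⟨y, hy0, hy1, ht⟩ => ?_
        rcases ncard_lt_of_sparse_window hw0 hy0 hy1 ht with h | ⟨k, hk, h⟩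
        · exact Or.inl h
        · exact Or.inr (mem_biUnion (Finset.mem_range.mpr hk) h)
    _ ≤ E + ∑ _k ∈ Finset.range K, E :=
        (measure_union_le _ _).trans
          (add_le_add hwhole ((measure_biUnion_finset_le _ _).trans (Finset.sum_le_sum hhalf)))
    _ = ENNReal.ofReal ((K + 1) * exp (-(klFun (2 * α) * (l * (w / 2))))) := by
        rw [Finset.sum_const, Finset.card_range, nsmul_eq_mul, ENNReal.ofReal_mul (by positivity),
          ENNReal.ofReal_add (by positivity) zero_le_one, ENNReal.ofReal_natCast,
          ENNReal.ofReal_one]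
        ring
    _ ≤ _ := by
        gcongr
        exact Nat.floor_le (by positivity)

lemma two_div_add_one_mul_exp_le {c l w : ℝ} (hc : 0 < c) (hl : 1 ≤ l) (hw : 0 < w)
    (hlw : 2 ≤ l * w) (hC : 6 / c * log l ≤ l * w) :
    (2 / w + 1) * exp (-(c * (l * (w / 2)))) ≤ 2 / l ^ 2 := by
  have hK : 2 / w ≤ l := by rw [div_le_iff₀ hw]; linarith
  have hexp : exp (-(c * (l * (w / 2)))) ≤ (l ^ 3)⁻¹ := by
    rw [← exp_log (by positivity : (0 : ℝ) < l ^ 3), ← exp_neg, exp_le_exp, log_pow]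
    have : 6 * log l ≤ c * (l * w) := by
      rwa [div_mul_eq_mul_div, div_le_iff₀' hc] at hC
    push_cast
    linarith
  calc (2 / w + 1) * exp (-(c * (l * (w / 2)))) ≤ (2 * l) * (l ^ 3)⁻¹ := by
        gcongr; linarith
    _ = 2 / l ^ 2 := by field_simp

lemma tendsto_measure_nhds_one_of_compl {ι Ω : Type*} [MeasurableSpace Ω] {P : Measure Ω}
    [IsProbabilityMeasure P] {L : Filter ι} {A : ι → Set Ω}
    (h : Tendsto (fun i => P (A i)ᶜ) L (𝓝 0)) : Tendsto (fun i => P (A i)) L (𝓝 1) := by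
  have hlow : Tendsto (fun i => 1 - P (A i)ᶜ) L (𝓝 1) := by
    simpa using ENNReal.Tendsto.sub tendsto_const_nhds h (Or.inl ENNReal.one_ne_top)
  refine tendsto_of_tendsto_of_tendsto_of_le_of_le hlow tendsto_const_nhds (fun i => ?_)
    fun _ => prob_le_one
  rw [tsub_le_iff_right, ← measure_univ (μ := P), ← union_compl_self (A i)]
  exact measure_union_le _ _

/-- For each `α ∈ (0, 1/2)` there is `C > 0` such that if `λ w_λ ≥ C log λ` and `X_λ` is a
Poisson point process on `[0,1]` with intensity `λ`, then the probability that every window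
`(y, y+w_λ)` with `y ∈ [0, 1-w_λ]` contains at least `α λ w_λ` points tends to `1` as
`λ → ∞`. -/
theorem stmt_14 {Ω : Type*} [MeasurableSpace Ω] (P : Measure Ω) [IsProbabilityMeasure P]
    (α : ℝ) (hα : α ∈ Set.Ioo (0:ℝ) (1/2)) :
    ∃ C : ℝ, 0 < C ∧ ∀ (w : ℝ → ℝ) (X : ℝ → Ω → Set ℝ),
      (∀ l : ℝ, 1 ≤ l → 0 < w l ∧ w l ≤ 1) →
      (∀ l : ℝ, 1 ≤ l → C * Real.log l ≤ l * w l) →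
      (∀ l : ℝ, 1 ≤ l → IsPPP P l (X l)) →
      Tendsto (fun l : ℝ => P {ω | ∀ y : ℝ, 0 ≤ y → y ≤ 1 - w l →
          α * l * w l ≤ ((X l ω ∩ Set.Ioo y (y + w l)).ncard : ℝ)})
        atTop (nhds 1) := by
  obtain ⟨hα0, hα1⟩ := hα
  have hc : 0 < klFun (2 * α) := klFun_pos (by positivity) (by linarith)
  refine ⟨6 / klFun (2 * α), by positivity, fun w X hw hCw hX => ?_⟩
  refine tendsto_measure_nhds_one_of_compl (tendsto_of_tendsto_of_tendsto_of_le_of_le'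
    tendsto_const_nhds (h := fun l : ℝ => ENNReal.ofReal (2 / l ^ 2)) ?_
    (Eventually.of_forall fun _ => zero_le) ?_)
  · simpa using ENNReal.tendsto_ofReal
      (Tendsto.div_atTop tendsto_const_nhds (tendsto_pow_atTop two_ne_zero))
  have hlog : ∀ᶠ l in atTop, 2 ≤ 6 / klFun (2 * α) * log l :=
    (tendsto_log_atTop.const_mul_atTop (by positivity)).eventually_ge_atTop 2
  filter_upwards [eventually_ge_atTop 1, hlog] with l hl hl2
  obtain ⟨hw0, hw1⟩ := hw l hl
  calc _ ≤ P {ω | ∃ y, 0 ≤ y ∧ y ≤ 1 - w l ∧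
          ((X l ω ∩ Ioo y (y + w l)).ncard : ℝ) < α * l * w l} :=
        measure_mono fun ω hω => by simpa using hω
    _ ≤ _ := (hX l hl).measure_exists_sparse_window_le (by linarith) hw0 hw1 hα0 (by linarith)
    _ ≤ _ := ENNReal.ofReal_le_ofReal
        (two_div_add_one_mul_exp_le hc hl hw0 ((hl2.trans (hCw l hl))) (hCw l hl))
end
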